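/- arXiv:2005.10230 — 8 statements merged into one kernel-verified Lean document; each statement's English description precedes it below -/
import Mathlib

section
/- Let φ₁, φ₂ : ℝᵖ → ℝ ∪ {∞} be proper, lsc, convex. Given γ* > 0, λ* > 0 and s* ∈ ℝᵖ, define the dual DRS update u* = prox_{γ* φ₁*}(s*), v* = prox_{γ* φ₂*}(2u* − s*), s*⁺ = s* + λ*(v* − u*), where φ₁* = (φ₁(−·))* and φ₂* = φ₂*. Set γ = 1/γ*, λ = λ*, s = −s*/γ* and define the primal DRS update u = prox_{γφ₁}(s), v = prox_{γφ₂}(2u − s), s⁺ = s + λ(v − u). Then u = (u* − s*)/γ*, v = (2u* − s* − v*)/γ*, and s⁺ = −s*⁺/γ*. -/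
open scoped RealInnerProductSpace
open Filter Topology

/-- The convex (Fenchel) conjugate of an extended-real-valued function. -/
noncomputable def eConj {n : ℕ} (h : EuclideanSpace ℝ (Fin n) → EReal)
    (y : EuclideanSpace ℝ (Fin n)) : EReal :=
  ⨆ x, ((⟪y, x⟫ : ℝ) : EReal) - h x

/-- `h` is proper: nowhere `⊥` and not identically `⊤`. -/
def ProperFn {n : ℕ} (h : EuclideanSpace ℝ (Fin n) → EReal) : Prop :=
  (∃ x, h x ≠ ⊤) ∧ ∀ x, h x ≠ ⊥

/-- Convexity for extended-real-valued functions. -/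
def EConvexOn {n : ℕ} (h : EuclideanSpace ℝ (Fin n) → EReal) : Prop :=
  ∀ x y : EuclideanSpace ℝ (Fin n), ∀ a b : ℝ, 0 ≤ a → 0 ≤ b → a + b = 1 →
    h (a • x + b • y) ≤ (a : EReal) * h x + (b : EReal) * h y

/-- `u ∈ prox_{γ h}(x)` for an extended-real-valued `h`. -/
def IsProx {n : ℕ} (h : EuclideanSpace ℝ (Fin n) → EReal) (γ : ℝ)
    (x u : EuclideanSpace ℝ (Fin n)) : Prop :=
  ∀ w, h u + ((‖u - x‖ ^ 2 / (2 * γ) : ℝ) : EReal) ≤ h w + ((‖w - x‖ ^ 2 / (2 * γ) : ℝ) : EReal)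

/-- `u = prox_{γ h}(x)` for a real-valued `h`. -/
def IsProxR {n : ℕ} (h : EuclideanSpace ℝ (Fin n) → ℝ) (γ : ℝ)
    (x u : EuclideanSpace ℝ (Fin n)) : Prop :=
  ∀ w, h u + ‖u - x‖ ^ 2 / (2 * γ) ≤ h w + ‖w - x‖ ^ 2 / (2 * γ)

/-- The Moreau envelope `h^γ`. -/
noncomputable def moreauEnv {n : ℕ} (h : EuclideanSpace ℝ (Fin n) → EReal) (γ : ℝ)
    (x : EuclideanSpace ℝ (Fin n)) : EReal :=
  ⨅ w, h w + ((‖w - x‖ ^ 2 / (2 * γ) : ℝ) : EReal)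

/-- The Douglas–Rachford envelope value at `s`, given the prox points `u, v`. -/
noncomputable def dre {n : ℕ} (φ₁ φ₂ : EuclideanSpace ℝ (Fin n) → EReal) (γ : ℝ)
    (s u v : EuclideanSpace ℝ (Fin n)) : EReal :=
  φ₁ u + φ₂ v + (((1 / γ) * ⟪s - u, v - u⟫ + ‖v - u‖ ^ 2 / (2 * γ) : ℝ) : EReal)

/-- `v` belongs to the regular (Fréchet) subdifferential of `h` at `x̄`. -/
def RegSubdiffAt {n : ℕ} (h : EuclideanSpace ℝ (Fin n) → EReal)
    (xbar v : EuclideanSpace ℝ (Fin n)) : Prop :=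
  ∀ ε : ℝ, 0 < ε → ∀ᶠ x in nhds xbar,
    h xbar + ((⟪v, x - xbar⟫ - ε * ‖x - xbar‖ : ℝ) : EReal) ≤ h x

/-- `μ`-strong convexity for extended-real-valued functions. -/
def EStrongConvexOn {n : ℕ} (μ : ℝ) (h : EuclideanSpace ℝ (Fin n) → EReal) : Prop :=
  EConvexOn (fun x => h x - ((μ / 2 * ‖x‖ ^ 2 : ℝ) : EReal))

/-!
A prox step is an implicit subgradient step: `u = prox_{γφ}(s)` means that `(s - u)/γ` is a
subgradient of `φ` at `u`. If `g` is a subgradient of `f` at `x`, then Fenchel–Young holds with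
equality at `(x, g)`, so `f*` lies above the affine function `y ↦ ⟪y, x⟫ - f x` and touches it at
`g`; the prox of `γ f*` at `g + γ x` is therefore `g` (Moreau's decomposition). Applying this to
the two primal prox steps identifies the two dual ones.
-/

variable {n : ℕ}

/-- `g ∈ ∂f(x)`, where `f x` is required to be finite. -/
def IsSubgradient (f : EuclideanSpace ℝ (Fin n) → EReal) (x g : EuclideanSpace ℝ (Fin n)) :
    Prop :=
  ∃ r : ℝ, f x = r ∧ ∀ w, ((r + ⟪g, w - x⟫ : ℝ) : EReal) ≤ f w

theorem le_of_forall_le_add_mul {a b c : ℝ} (h : ∀ t : ℝ, 0 < t → t ≤ 1 → a ≤ b + t * c) :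
    a ≤ b := by
  have hlim : Tendsto (fun t : ℝ => b + t * c) (𝓝[>] 0) (𝓝 b) := by
    have : Tendsto (fun t : ℝ => b + t * c) (𝓝 0) (𝓝 (b + 0 * c)) :=
      tendsto_const_nhds.add (tendsto_id.mul_const c)
    simpa using this.mono_left nhdsWithin_le_nhds
  refine ge_of_tendsto hlim ?_
  filter_upwards [Ioc_mem_nhdsGT one_pos] with t ht using h t ht.1 ht.2

theorem ProperFn.exists_eq_coe {f : EuclideanSpace ℝ (Fin n) → EReal} (hf : ProperFn f)
    {x : EuclideanSpace ℝ (Fin n)} (hx : f x ≠ ⊤) : ∃ r : ℝ, f x = r :=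
  ⟨(f x).toReal, (EReal.coe_toReal hx (hf.2 x)).symm⟩

theorem IsProx.ne_top {f : EuclideanSpace ℝ (Fin n) → EReal} {γ : ℝ}
    {s u : EuclideanSpace ℝ (Fin n)} (hu : IsProx f γ s u) (hf : ProperFn f) : f u ≠ ⊤ := by
  obtain ⟨x, hx⟩ := hf.1
  intro htop
  have hlt := (hu x).trans_lt (EReal.add_lt_top hx (EReal.coe_ne_top _))
  rw [htop, EReal.top_add_coe] at hlt
  exact lt_irrefl _ hlt

theorem IsProx.isSubgradient {f : EuclideanSpace ℝ (Fin n) → EReal} {γ : ℝ}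
    {s u : EuclideanSpace ℝ (Fin n)} (hu : IsProx f γ s u) (hf : ProperFn f)
    (hc : EConvexOn f) (hγ : 0 < γ) : IsSubgradient f u (γ⁻¹ • (s - u)) := by
  obtain ⟨r, hr⟩ := hf.exists_eq_coe (hu.ne_top hf)
  refine ⟨r, hr, fun w => ?_⟩
  rcases eq_or_ne (f w) ⊤ with hw | hw
  · rw [hw]; exact le_top
  obtain ⟨r', hr'⟩ := hf.exists_eq_coe hw
  rw [hr', EReal.coe_le_coe_iff]
  set I := ⟪u - s, w - u⟫
  set N := ‖w - u‖ ^ 2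
  -- compare `u` with the points `u + t (w - u)` of the segment towards `w`
  have hseg : ∀ t : ℝ, 0 < t → t ≤ 1 → r - r' ≤ I / γ + t * (N / (2 * γ)) := by
    intro t ht ht1
    have hconv := hc w u t (1 - t) ht.le (by linarith) (by ring)
    have hprox := (hu (t • w + (1 - t) • u)).trans (add_le_add hconv le_rfl)
    rw [hr, hr'] at hprox
    norm_cast at hprox
    have hnorm : ‖t • w + (1 - t) • u - s‖ ^ 2 = ‖u - s‖ ^ 2 + 2 * (t * I) + t ^ 2 * N := by
      rw [show t • w + (1 - t) • u - s = (u - s) + t • (w - u) by module, norm_add_sq_real,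
        real_inner_smul_right, norm_smul, mul_pow, Real.norm_of_nonneg ht.le]
    rw [hnorm, show (‖u - s‖ ^ 2 + 2 * (t * I) + t ^ 2 * N) / (2 * γ)
      = ‖u - s‖ ^ 2 / (2 * γ) + t * (I / γ + t * (N / (2 * γ))) by field_simp; ring] at hprox
    have h : t * (r - r') ≤ t * (I / γ + t * (N / (2 * γ))) := by linarith
    exact le_of_mul_le_mul_left h ht
  have hinner : ⟪γ⁻¹ • (s - u), w - u⟫ = -(I / γ) := by
    rw [real_inner_smul_left, ← neg_sub u s, inner_neg_left]; ring
  linarith [le_of_forall_le_add_mul hseg]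

theorem IsSubgradient.comp_neg {f : EuclideanSpace ℝ (Fin n) → EReal}
    {x g : EuclideanSpace ℝ (Fin n)} (hg : IsSubgradient f x g) :
    IsSubgradient (fun y => f (-y)) (-x) (-g) := by
  obtain ⟨r, hr, hsub⟩ := hg
  refine ⟨r, by simpa using hr, fun w => ?_⟩
  rw [show w - -x = -(-w - x) by abel, inner_neg_neg]
  exact hsub (-w)

theorem le_eConj (f : EuclideanSpace ℝ (Fin n) → EReal) (x y : EuclideanSpace ℝ (Fin n)) :
    ((⟪y, x⟫ : ℝ) : EReal) - f x ≤ eConj f y :=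
  le_iSup (fun x => ((⟪y, x⟫ : ℝ) : EReal) - f x) x

theorem IsProx.eq_of_affine_minorant {φ : EuclideanSpace ℝ (Fin n) → EReal} {γ c : ℝ}
    {x g p : EuclideanSpace ℝ (Fin n)} (hp : IsProx φ γ (g + γ • x) p) (hγ : 0 < γ)
    (hle : ∀ y, ((⟪y, x⟫ - c : ℝ) : EReal) ≤ φ y) (heq : φ g = ((⟪g, x⟫ - c : ℝ) : EReal)) :
    p = g := by
  have h := (add_le_add (hle p) le_rfl).trans (hp g)
  rw [heq] at h
  norm_cast at h
  -- the quadratic is `‖p - g‖² / (2γ)` plus an affine function of `p` that cancels the minorant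
  have hsplit : ‖p - (g + γ • x)‖ ^ 2 / (2 * γ)
      = ‖p - g‖ ^ 2 / (2 * γ) - ⟪p - g, x⟫ + ‖g - (g + γ • x)‖ ^ 2 / (2 * γ) := by
    rw [show p - (g + γ • x) = (p - g) - γ • x by abel, show g - (g + γ • x) = -(γ • x) by abel,
      norm_sub_sq_real, norm_neg, real_inner_smul_right]
    field_simp
  rw [hsplit, inner_sub_left] at h
  have hsq : ‖p - g‖ ^ 2 ≤ 0 := by
    have : ‖p - g‖ ^ 2 / (2 * γ) ≤ 0 := by linarith
    simpa using (div_le_iff₀ (by positivity)).mp this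
  rw [← sub_eq_zero, ← norm_eq_zero]
  exact pow_eq_zero_iff two_ne_zero |>.mp (le_antisymm hsq (sq_nonneg _))

theorem IsSubgradient.isProx_eConj_eq {f : EuclideanSpace ℝ (Fin n) → EReal} {γ : ℝ}
    {x g p : EuclideanSpace ℝ (Fin n)} (hg : IsSubgradient f x g) (hγ : 0 < γ)
    (hp : IsProx (eConj f) γ (g + γ • x) p) : p = g := by
  obtain ⟨r, hr, hsub⟩ := hg
  have hle : ∀ y, ((⟪y, x⟫ - r : ℝ) : EReal) ≤ eConj f y := fun y => by
    simpa [hr] using le_eConj f x y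
  have hfenchel : eConj f g = ((⟪g, x⟫ - r : ℝ) : EReal) := by
    refine le_antisymm (iSup_le fun y => ?_) (hle g)
    refine (EReal.sub_le_sub le_rfl (hsub y)).trans ?_
    rw [← EReal.coe_sub, EReal.coe_le_coe_iff, inner_sub_right]
    linarith
  exact hp.eq_of_affine_minorant hγ hle hfenchel

theorem drs_self_dual_general {n : ℕ} (φ₁ φ₂ : EuclideanSpace ℝ (Fin n) → EReal)
    (h1p : ProperFn φ₁) (h1c : EConvexOn φ₁)
    (h2p : ProperFn φ₂) (h2c : EConvexOn φ₂)
    (γs lams : ℝ) (hγs : 0 < γs)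
    (sstar ustar vstar u v : EuclideanSpace ℝ (Fin n))
    -- dual DRS update with stepsize γ*, where φ₁* = (φ₁(−·))* and φ₂* = φ₂*
    (hustar : IsProx (eConj (fun x => φ₁ (-x))) γs sstar ustar)
    (hvstar : IsProx (eConj φ₂) γs ((2 : ℝ) • ustar - sstar) vstar)
    -- primal DRS update with stepsize γ = 1/γ* at s = −s*/γ*
    (hu : IsProx φ₁ (1 / γs) (-(γs⁻¹ • sstar)) u)
    (hv : IsProx φ₂ (1 / γs) ((2 : ℝ) • u - -(γs⁻¹ • sstar)) v) :
    u = γs⁻¹ • (ustar - sstar) ∧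
    v = γs⁻¹ • ((2 : ℝ) • ustar - sstar - vstar) ∧
    -(γs⁻¹ • sstar) + lams • (v - u) = -(γs⁻¹ • (sstar + lams • (vstar - ustar))) := by
  have hg₁ := (hu.isSubgradient h1p h1c (by positivity)).comp_neg
  have hg₂ := hv.isSubgradient h2p h2c (by positivity)
  rw [one_div, inv_inv] at hg₁ hg₂
  have hu' : u = γs⁻¹ • (ustar - sstar) := by
    rw [show sstar = -(γs • (-(γs⁻¹ • sstar) - u)) + γs • -u by
      match_scalars <;> field_simp; ring] at hustar
    rw [hg₁.isProx_eConj_eq hγs hustar]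
    match_scalars <;> field_simp; ring
  have hv' : v = γs⁻¹ • ((2 : ℝ) • ustar - sstar - vstar) := by
    rw [show (2 : ℝ) • ustar - sstar = γs • ((2 : ℝ) • u - -(γs⁻¹ • sstar) - v) + γs • v by
      rw [hu']; match_scalars <;> field_simp <;> ring] at hvstar
    rw [hg₂.isProx_eConj_eq hγs hvstar, hu']
    match_scalars <;> field_simp <;> ring
  refine ⟨hu', hv', ?_⟩
  rw [hu', hv']
  module

/-- Self-duality of the Douglas–Rachford splitting iteration. -/
theorem drs_self_dual {n : ℕ} (φ₁ φ₂ : EuclideanSpace ℝ (Fin n) → EReal)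
    (h1p : ProperFn φ₁) (h1l : LowerSemicontinuous φ₁) (h1c : EConvexOn φ₁)
    (h2p : ProperFn φ₂) (h2l : LowerSemicontinuous φ₂) (h2c : EConvexOn φ₂)
    (γs lams : ℝ) (hγs : 0 < γs) (hlams : 0 < lams)
    (sstar ustar vstar u v : EuclideanSpace ℝ (Fin n))
    -- dual DRS update with stepsize γ*, where φ₁* = (φ₁(−·))* and φ₂* = φ₂*
    (hustar : IsProx (eConj (fun x => φ₁ (-x))) γs sstar ustar)
    (hvstar : IsProx (eConj φ₂) γs ((2 : ℝ) • ustar - sstar) vstar)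
    -- primal DRS update with stepsize γ = 1/γ* at s = −s*/γ*
    (hu : IsProx φ₁ (1 / γs) (-(γs⁻¹ • sstar)) u)
    (hv : IsProx φ₂ (1 / γs) ((2 : ℝ) • u - -(γs⁻¹ • sstar)) v) :
    u = γs⁻¹ • (ustar - sstar) ∧
    v = γs⁻¹ • ((2 : ℝ) • ustar - sstar - vstar) ∧
    -(γs⁻¹ • sstar) + lams • (v - u) = -(γs⁻¹ • (sstar + lams • (vstar - ustar))) :=
  drs_self_dual_general φ₁ φ₂ h1p h1c h2p h2c γs lams hγs sstar ustar vstar u v hustar hvstar hu hv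
end

section
/- Let φ₁ : ℝᵖ → ℝ be differentiable with L-Lipschitz continuous gradient, φ₂ : ℝᵖ → ℝ ∪ {∞} proper lsc, and 0 < γ < 1/L. For s ∈ ℝᵖ let u = prox_{γφ₁}(s) and v ∈ prox_{γφ₂}(2u−s), and define φ^γ_DR(s) = φ₁(u) + φ₂(v) + (1/γ)⟨s−u, v−u⟩ + (1/(2γ))‖v−u‖². Then φ(v) + ((1−γL)/(2γ))‖v−u‖² ≤ φ^γ_DR(s) ≤ φ(u), where φ = φ₁ + φ₂. -/
/-!
The optimality condition of the smooth prox step is `s - u = γ ∇φ₁(u)`, so the inner-product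
term of the envelope equals `⟪∇φ₁(u), v - u⟫` and the lower bound is the descent lemma for `φ₁`
at `u`. For the upper bound, compare the prox objective of `φ₂` at `2u - s` at the minimiser `v`
with its value at `u`: expanding `‖v - (2u - s)‖² = ‖(v - u) + (s - u)‖²`, the difference is
exactly the envelope minus `φ(u)`.
-/

open scoped RealInnerProductSpace
open Filter Topology

section
variable {E : Type*} [NormedAddCommGroup E] [InnerProductSpace ℝ E]

theorem norm_sub_two_smul_sub_sq (s u v : E) :
    ‖v - ((2 : ℝ) • u - s)‖ ^ 2
      = 2 * ⟪s - u, v - u⟫ + ‖v - u‖ ^ 2 + ‖u - ((2 : ℝ) • u - s)‖ ^ 2 := by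
  have e1 : v - ((2 : ℝ) • u - s) = (v - u) + (s - u) := by rw [two_smul]; abel
  have e2 : u - ((2 : ℝ) • u - s) = s - u := by rw [two_smul]; abel
  rw [e1, e2, norm_add_sq_real, real_inner_comm]
  ring

section
variable [CompleteSpace E] {f : E → ℝ}

theorem HasGradientAt.hasDerivAt_comp_add_smul {x d g : E} {t : ℝ}
    (hf : HasGradientAt f g (x + t • d)) :
    HasDerivAt (fun t : ℝ => f (x + t • d)) ⟪g, d⟫ t := by
  have hline : HasDerivAt (fun t : ℝ => x + t • d) d t := by
    simpa using ((hasDerivAt_id t).smul_const d).const_add x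
  simpa [Function.comp_def] using hf.hasFDerivAt.comp_hasDerivAt t hline

theorem le_add_inner_add_sq_of_lipschitz_gradient {f' : E → E} {L : ℝ}
    (hf : ∀ x, HasGradientAt f (f' x) x) (hlip : ∀ x y, ‖f' x - f' y‖ ≤ L * ‖x - y‖)
    (x y : E) : f y ≤ f x + ⟪f' x, y - x⟫ + L / 2 * ‖y - x‖ ^ 2 := by
  set d := y - x
  let g : ℝ → ℝ := fun t => f (x + t • d) - t * ⟪f' x, d⟫ - L / 2 * t ^ 2 * ‖d‖ ^ 2
  have hg : ∀ t, HasDerivAt g (⟪f' (x + t • d), d⟫ - ⟪f' x, d⟫ - L * t * ‖d‖ ^ 2) t := by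
    intro t
    have h2 := hasDerivAt_mul_const (x := t) ⟪f' x, d⟫
    have h3 := ((hasDerivAt_pow 2 t).const_mul (L / 2)).mul_const (‖d‖ ^ 2)
    exact (((hf _).hasDerivAt_comp_add_smul.sub h2).sub h3).congr_deriv (by push_cast; ring)
  have hslope : ∀ t : ℝ, 0 < t → ⟪f' (x + t • d), d⟫ - ⟪f' x, d⟫ ≤ L * t * ‖d‖ ^ 2 := by
    intro t ht
    have hlip' : ‖f' (x + t • d) - f' x‖ ≤ L * t * ‖d‖ := by
      simpa [norm_smul, abs_of_pos ht, mul_assoc] using hlip (x + t • d) x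
    calc ⟪f' (x + t • d), d⟫ - ⟪f' x, d⟫ = ⟪f' (x + t • d) - f' x, d⟫ := (inner_sub_left ..).symm
      _ ≤ ‖f' (x + t • d) - f' x‖ * ‖d‖ := real_inner_le_norm _ _
      _ ≤ L * t * ‖d‖ * ‖d‖ := by gcongr
      _ = L * t * ‖d‖ ^ 2 := by ring
  have hanti : AntitoneOn g (Set.Ici 0) := by
    refine antitoneOn_of_hasDerivWithinAt_nonpos (convex_Ici 0)
      (fun t _ => (hg t).continuousAt.continuousWithinAt)
      (fun t _ => (hg t).hasDerivWithinAt) ?_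
    rw [interior_Ici]
    exact fun t ht => sub_nonpos.2 (hslope t ht)
  have h01 := hanti (Set.mem_Ici.2 le_rfl) (Set.mem_Ici.2 zero_le_one) zero_le_one
  simp only [g, one_smul, zero_smul, add_zero, add_sub_cancel, d] at h01
  linarith

theorem smul_eq_sub_of_isLocalMin_add_sq {γ : ℝ} (hγ : γ ≠ 0) {s u g : E}
    (hmin : IsLocalMin (fun w => f w + ‖w - s‖ ^ 2 / (2 * γ)) u)
    (hf : HasGradientAt f g u) : γ • g = s - u := by
  have hq : HasFDerivAt (fun w => ‖w - s‖ ^ 2 / (2 * γ))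
      (InnerProductSpace.toDual ℝ E (γ⁻¹ • (u - s))) u := by
    have h := ((hasFDerivAt_id u).sub_const s).norm_sq.mul_const (2 * γ)⁻¹
    simp only [id, ← div_eq_mul_inv] at h
    refine h.congr_fderiv ?_
    ext w
    simp only [mul_inv_rev, map_sub, ContinuousLinearMap.comp_id, smul_apply,
      sub_apply, coe_innerSL_apply, nsmul_eq_mul, Nat.cast_ofNat, smul_eq_mul,
      map_smul, InnerProductSpace.toDual_apply_apply]
    field_simp
  have hzero := hmin.hasFDerivAt_eq_zero (hf.hasFDerivAt.add hq)
  rw [← map_add, LinearIsometryEquiv.map_eq_zero_iff] at hzero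
  rw [eq_neg_of_add_eq_zero_left hzero, smul_neg, smul_smul, mul_inv_cancel₀ hγ, one_smul, neg_sub]

end

end

section
variable {n : ℕ}

theorem dre_le_of_isProx (φ₁ φ₂ : EuclideanSpace ℝ (Fin n) → EReal) {γ : ℝ}
    {s u v : EuclideanSpace ℝ (Fin n)} (hv : IsProx φ₂ γ ((2 : ℝ) • u - s) v) :
    dre φ₁ φ₂ γ s u v ≤ φ₁ u + φ₂ u := by
  have h := hv u
  rw [norm_sub_two_smul_sub_sq, add_div, EReal.coe_add, ← add_assoc] at h
  rw [dre, add_assoc]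
  gcongr
  refine (EReal.addLECancellable_coe _).add_le_add_iff_right.1 (le_of_eq_of_le ?_ h)
  congr 3
  ring

theorem le_dre_of_le_inner_add_sq (φ₁ : EuclideanSpace ℝ (Fin n) → ℝ)
    (φ₂ : EuclideanSpace ℝ (Fin n) → EReal) {γ L : ℝ} (hγ : γ ≠ 0)
    {s u v g : EuclideanSpace ℝ (Fin n)}
    (hg : γ • g = s - u) (hdesc : φ₁ v ≤ φ₁ u + ⟪g, v - u⟫ + L / 2 * ‖v - u‖ ^ 2) :
    ((φ₁ v : ℝ) : EReal) + φ₂ v + (((1 - γ * L) / (2 * γ) * ‖v - u‖ ^ 2 : ℝ) : EReal)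
      ≤ dre (fun x => ((φ₁ x : ℝ) : EReal)) φ₂ γ s u v := by
  have hreal : φ₁ v + (1 - γ * L) / (2 * γ) * ‖v - u‖ ^ 2
      ≤ φ₁ u + ((1 / γ) * ⟪s - u, v - u⟫ + ‖v - u‖ ^ 2 / (2 * γ)) := by
    have e1 : 1 / γ * (γ * ⟪g, v - u⟫) = ⟪g, v - u⟫ := by field_simp
    have e2 : (1 - γ * L) / (2 * γ) * ‖v - u‖ ^ 2
        = ‖v - u‖ ^ 2 / (2 * γ) - L / 2 * ‖v - u‖ ^ 2 := by
      field_simp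
    rw [← hg, real_inner_smul_left, e1, e2]
    linarith
  rw [dre, add_right_comm, ← EReal.coe_add, add_right_comm _ (φ₂ v), ← EReal.coe_add]
  exact add_le_add_left (EReal.coe_le_coe_iff.2 hreal) _

end

theorem dre_sandwich_general {n : ℕ} (φ₁ : EuclideanSpace ℝ (Fin n) → ℝ)
    (f' : EuclideanSpace ℝ (Fin n) → EuclideanSpace ℝ (Fin n)) (L : ℝ)
    (hdiff : ∀ x, HasGradientAt φ₁ (f' x) x)
    (hlip : ∀ x y, ‖f' x - f' y‖ ≤ L * ‖x - y‖)
    (φ₂ : EuclideanSpace ℝ (Fin n) → EReal)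
    (γ : ℝ) (hγ0 : 0 < γ)
    (s u v : EuclideanSpace ℝ (Fin n))
    (hu : IsProxR φ₁ γ s u) (hv : IsProx φ₂ γ ((2 : ℝ) • u - s) v) :
    ((φ₁ v : ℝ) : EReal) + φ₂ v + (((1 - γ * L) / (2 * γ) * ‖v - u‖ ^ 2 : ℝ) : EReal)
        ≤ dre (fun x => ((φ₁ x : ℝ) : EReal)) φ₂ γ s u v ∧
      dre (fun x => ((φ₁ x : ℝ) : EReal)) φ₂ γ s u v ≤ ((φ₁ u : ℝ) : EReal) + φ₂ u := by
  have hgrad : γ • f' u = s - u :=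
    smul_eq_sub_of_isLocalMin_add_sq hγ0.ne' (Filter.Eventually.of_forall hu) (hdiff u)
  exact ⟨le_dre_of_le_inner_add_sq φ₁ φ₂ hγ0.ne' hgrad
      (le_add_inner_add_sq_of_lipschitz_gradient hdiff hlip u v),
    dre_le_of_isProx _ φ₂ hv⟩

/-- Sandwich inequality for the Douglas–Rachford envelope:
`φ(v) + ((1−γL)/(2γ))‖v−u‖² ≤ φ^γ_DR(s) ≤ φ(u)` where `φ = φ₁ + φ₂`. -/
theorem dre_sandwich {n : ℕ} (φ₁ : EuclideanSpace ℝ (Fin n) → ℝ)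
    (f' : EuclideanSpace ℝ (Fin n) → EuclideanSpace ℝ (Fin n)) (L : ℝ) (hL : 0 < L)
    (hdiff : ∀ x, HasGradientAt φ₁ (f' x) x)
    (hlip : ∀ x y, ‖f' x - f' y‖ ≤ L * ‖x - y‖)
    (φ₂ : EuclideanSpace ℝ (Fin n) → EReal)
    (h2p : ProperFn φ₂) (h2l : LowerSemicontinuous φ₂)
    (γ : ℝ) (hγ0 : 0 < γ) (hγ : γ < 1 / L)
    (s u v : EuclideanSpace ℝ (Fin n))
    (hu : IsProxR φ₁ γ s u) (hv : IsProx φ₂ γ ((2 : ℝ) • u - s) v) :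
    ((φ₁ v : ℝ) : EReal) + φ₂ v + (((1 - γ * L) / (2 * γ) * ‖v - u‖ ^ 2 : ℝ) : EReal)
        ≤ dre (fun x => ((φ₁ x : ℝ) : EReal)) φ₂ γ s u v ∧
      dre (fun x => ((φ₁ x : ℝ) : EReal)) φ₂ γ s u v ≤ ((φ₁ u : ℝ) : EReal) + φ₂ u :=
  dre_sandwich_general φ₁ f' L hdiff hlip φ₂ γ hγ0 s u v hu hv
end

section
/- Let φ₁ : ℝᵖ → ℝ be differentiable with L-Lipschitz gradient, φ₂ : ℝᵖ → ℝ ∪ {∞} proper lsc, 0 < γ < 1/L, and φ = φ₁ + φ₂. Then for all s, ū ∈ ℝᵖ it holds that φ^γ_DR(s) − φ(ū) ≤ ((1+γL)/(2γ)) ‖prox_{γφ₁}(s) − ū‖². -/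
open scoped RealInnerProductSpace
open Filter Topology

/-! Since `u = prox_{γφ₁}(s)` and `φ₁` is smooth, `s - u = γ ∇φ₁(u)`; hence `v = prox_{γφ₂}(2u - s)`
minimises `w ↦ φ₁(u) + φ₂(w) + ⟨∇φ₁(u), w - u⟩ + ‖w - u‖²/(2γ)`, whose value at `v` is the DRE.
Evaluating at `w = ū` and bounding `φ₁(u) + ⟨∇φ₁(u), ū - u⟩ ≤ φ₁(ū) + (L/2)‖ū - u‖²` (the quadratic
bound coming from the `L`-Lipschitz gradient) gives the claim. -/

theorem quadratic_lower_bound_of_lipschitz_fderiv {E : Type*} [NormedAddCommGroup E]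
    [NormedSpace ℝ E] {f : E → ℝ} {f' : E → E →L[ℝ] ℝ} {L : ℝ} (hf : ∀ x, HasFDerivAt f (f' x) x)
    (hlip : ∀ x y, ‖f' x - f' y‖ ≤ L * ‖x - y‖) (x y : E) :
    f x + f' x (y - x) - L / 2 * ‖y - x‖ ^ 2 ≤ f y := by
  set d := y - x
  -- `g 1 ≥ g 0` is the claim, and `g' ≥ 0` on `t ≥ 0` by the Lipschitz bound.
  let g : ℝ → ℝ := fun t => f (x + t • d) - t * f' x d + L / 2 * t ^ 2 * ‖d‖ ^ 2
  have hg : ∀ t, HasDerivAt g (f' (x + t • d) d - f' x d + L * t * ‖d‖ ^ 2) t := by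
    intro t
    have hline : HasDerivAt (fun t : ℝ => x + t • d) d t := by
      simpa using ((hasDerivAt_id t).smul_const d).const_add x
    have hlin : HasDerivAt (fun t : ℝ => t * f' x d) (f' x d) t := by
      simpa using (hasDerivAt_id t).mul_const (f' x d)
    have hquad : HasDerivAt (fun t : ℝ => L / 2 * t ^ 2 * ‖d‖ ^ 2) (L * t * ‖d‖ ^ 2) t :=
      (((hasDerivAt_pow 2 t).const_mul (L / 2)).mul_const (‖d‖ ^ 2)).congr_deriv (by ring_nf)
    exact (((hf _).comp_hasDerivAt t hline).sub hlin).add hquad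
  have hg_nonneg : ∀ t, 0 ≤ t → 0 ≤ f' (x + t • d) d - f' x d + L * t * ‖d‖ ^ 2 := by
    intro t ht
    have hgap : |(f' (x + t • d) - f' x) d| ≤ L * t * ‖d‖ ^ 2 :=
      calc |(f' (x + t • d) - f' x) d| ≤ ‖f' (x + t • d) - f' x‖ * ‖d‖ := by
            simpa only [Real.norm_eq_abs] using (f' (x + t • d) - f' x).le_opNorm d
        _ ≤ L * ‖x + t • d - x‖ * ‖d‖ := by gcongr; exact hlip _ _
        _ = L * t * ‖d‖ ^ 2 := by
            rw [add_sub_cancel_left, norm_smul, Real.norm_of_nonneg ht]; ring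
    rw [sub_apply] at hgap
    linarith [neg_abs_le (f' (x + t • d) d - f' x d)]
  have hmono : MonotoneOn g (Set.Ici 0) :=
    monotoneOn_of_hasDerivWithinAt_nonneg (convex_Ici 0)
      (fun t _ => (hg t).continuousAt.continuousWithinAt)
      (fun t _ => (hg t).hasDerivWithinAt)
      (fun t ht => hg_nonneg t (interior_subset ht))
  have h01 := hmono Set.self_mem_Ici (Set.mem_Ici.mpr zero_le_one) zero_le_one
  simp only [g, zero_smul, add_zero, zero_mul, sub_zero, one_smul, one_mul, one_pow, d,
    add_sub_cancel] at h01
  linarith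

theorem sub_eq_smul_of_isLocalMin_add_sq {F : Type*} [NormedAddCommGroup F]
    [InnerProductSpace ℝ F] [CompleteSpace F] {φ : F → ℝ} {g s u : F} {γ : ℝ} (hγ : γ ≠ 0)
    (hφ : HasGradientAt φ g u) (hmin : IsLocalMin (fun w => φ w + ‖w - s‖ ^ 2 / (2 * γ)) u) :
    s - u = γ • g := by
  simp only [div_eq_mul_inv] at hmin
  have hzero := hmin.hasFDerivAt_eq_zero
    (hφ.hasFDerivAt.add (((hasFDerivAt_id u).sub_const s).norm_sq.mul_const (2 * γ)⁻¹))
  have horth (y : F) : ⟪g + γ⁻¹ • (u - s), y⟫ = 0 := by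
    have := congr($hzero y)
    simp only [add_apply, smul_apply, zero_apply, InnerProductSpace.toDual_apply_apply,
      ContinuousLinearMap.comp_apply, innerSL_apply_apply, id, ContinuousLinearMap.id_apply,
      smul_eq_mul, nsmul_eq_mul] at this
    rw [inner_add_left, real_inner_smul_left]
    linear_combination this
  have hcrit : γ • (g + γ⁻¹ • (u - s)) = 0 := by rw [inner_self_eq_zero.mp (horth _), smul_zero]
  rw [smul_add, smul_smul, mul_inv_cancel₀ hγ, one_smul] at hcrit
  linear_combination (norm := module) -hcrit

theorem dre_quadratic_eq {F : Type*} [NormedAddCommGroup F] [InnerProductSpace ℝ F] {γ : ℝ}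
    (hγ : γ ≠ 0) (s u x : F) :
    (1 / γ) * ⟪s - u, x - u⟫ + ‖x - u‖ ^ 2 / (2 * γ)
      = ‖x - ((2 : ℝ) • u - s)‖ ^ 2 / (2 * γ) - ‖s - u‖ ^ 2 / (2 * γ) := by
  have hsplit : x - ((2 : ℝ) • u - s) = (x - u) + (s - u) := by module
  rw [hsplit, norm_add_sq_real, real_inner_comm]
  field_simp
  ring

theorem IsProx.dre_le {n : ℕ} {φ₁ φ₂ : EuclideanSpace ℝ (Fin n) → EReal} {γ : ℝ} (hγ : γ ≠ 0)
    {s u v : EuclideanSpace ℝ (Fin n)} (hv : IsProx φ₂ γ ((2 : ℝ) • u - s) v)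
    (w : EuclideanSpace ℝ (Fin n)) : dre φ₁ φ₂ γ s u v ≤ dre φ₁ φ₂ γ s u w := by
  have hshift (x : EuclideanSpace ℝ (Fin n)) :
      φ₂ x + (((1 / γ) * ⟪s - u, x - u⟫ + ‖x - u‖ ^ 2 / (2 * γ) : ℝ) : EReal)
        = φ₂ x + ((‖x - ((2 : ℝ) • u - s)‖ ^ 2 / (2 * γ) : ℝ) : EReal)
          + ((-(‖s - u‖ ^ 2 / (2 * γ)) : ℝ) : EReal) := by
    rw [dre_quadratic_eq hγ, sub_eq_add_neg, EReal.coe_add, add_assoc]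
  rw [dre, dre, add_assoc, add_assoc, hshift, hshift]
  gcongr φ₁ u + (?_ + _)
  exact hv w

theorem dre_upper_quadratic_general {n : ℕ} (φ₁ : EuclideanSpace ℝ (Fin n) → ℝ)
    (f' : EuclideanSpace ℝ (Fin n) → EuclideanSpace ℝ (Fin n)) (L : ℝ)
    (hdiff : ∀ x, HasGradientAt φ₁ (f' x) x)
    (hlip : ∀ x y, ‖f' x - f' y‖ ≤ L * ‖x - y‖)
    (φ₂ : EuclideanSpace ℝ (Fin n) → EReal)
    (h2p : ProperFn φ₂)
    (γ : ℝ) (hγ0 : 0 < γ)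
    (s ubar u v : EuclideanSpace ℝ (Fin n))
    (hu : IsProxR φ₁ γ s u) (hv : IsProx φ₂ γ ((2 : ℝ) • u - s) v) :
    dre (fun x => ((φ₁ x : ℝ) : EReal)) φ₂ γ s u v - (((φ₁ ubar : ℝ) : EReal) + φ₂ ubar)
      ≤ (((1 + γ * L) / (2 * γ) * ‖u - ubar‖ ^ 2 : ℝ) : EReal) := by
  have hgrad : s - u = γ • f' u :=
    sub_eq_smul_of_isLocalMin_add_sq hγ0.ne' (hdiff u) (Eventually.of_forall hu)
  have hdesc := quadratic_lower_bound_of_lipschitz_fderiv (fun x => (hdiff x).hasFDerivAt)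
    (fun x y => by rw [← map_sub, LinearIsometryEquiv.norm_map]; exact hlip x y) u ubar
  rw [InnerProductSpace.toDual_apply_apply] at hdesc
  refine (EReal.sub_le_sub (hv.dre_le hγ0.ne' ubar) le_rfl).trans ?_
  cases hb : φ₂ ubar using EReal.rec with
  | bot => exact absurd hb (h2p.2 ubar)
  | top => simp
  | coe b =>
    simp only [dre, hb, ← EReal.coe_add, ← EReal.coe_sub, EReal.coe_le_coe_iff]
    rw [hgrad, real_inner_smul_left, norm_sub_rev u ubar]
    have hsplit : (1 + γ * L) / (2 * γ) * ‖ubar - u‖ ^ 2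
        = L / 2 * ‖ubar - u‖ ^ 2 + ‖ubar - u‖ ^ 2 / (2 * γ) := by
      field_simp
      ring
    have hcancel : 1 / γ * (γ * ⟪f' u, ubar - u⟫) = ⟪f' u, ubar - u⟫ := by
      field_simp
    linarith

/-- Upper quadratic bound: `φ^γ_DR(s) − φ(ū) ≤ ((1+γL)/(2γ))‖prox_{γφ₁}(s) − ū‖²`. -/
theorem dre_upper_quadratic {n : ℕ} (φ₁ : EuclideanSpace ℝ (Fin n) → ℝ)
    (f' : EuclideanSpace ℝ (Fin n) → EuclideanSpace ℝ (Fin n)) (L : ℝ) (hL : 0 < L)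
    (hdiff : ∀ x, HasGradientAt φ₁ (f' x) x)
    (hlip : ∀ x y, ‖f' x - f' y‖ ≤ L * ‖x - y‖)
    (φ₂ : EuclideanSpace ℝ (Fin n) → EReal)
    (h2p : ProperFn φ₂) (h2l : LowerSemicontinuous φ₂)
    (γ : ℝ) (hγ0 : 0 < γ) (hγ : γ < 1 / L)
    (s ubar u v : EuclideanSpace ℝ (Fin n))
    (hu : IsProxR φ₁ γ s u) (hv : IsProx φ₂ γ ((2 : ℝ) • u - s) v) :
    dre (fun x => ((φ₁ x : ℝ) : EReal)) φ₂ γ s u v - (((φ₁ ubar : ℝ) : EReal) + φ₂ ubar)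
      ≤ (((1 + γ * L) / (2 * γ) * ‖u - ubar‖ ^ 2 : ℝ) : EReal) :=
  dre_upper_quadratic_general φ₁ f' L hdiff hlip φ₂ h2p γ hγ0 s ubar u v hu hv
end

section
/- Let φ₁ : ℝᵖ → ℝ be differentiable with L-Lipschitz gradient and 0 < γ < 1/L. Then prox_{γφ₁} is single-valued and (1/(1+γL))-strongly monotone, i.e. ⟨prox_{γφ₁}(s) − prox_{γφ₁}(s'), s − s'⟩ ≥ (1/(1+γL))‖s−s'‖² for all s, s'; in particular ‖prox_{γφ₁}(s) − prox_{γφ₁}(s')‖ ≥ (1/(1+γL))‖s−s'‖. -/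
open scoped RealInnerProductSpace
open Filter Topology

/-! A prox point `u` of `x` is a stationary point of `w ↦ φ₁ w + ‖w - x‖² / (2γ)`, so
`x = u + γ ∇φ₁ u`. Conversely, the descent lemma `φ₁ w ≥ φ₁ u + ⟪∇φ₁ u, w - u⟫ - L/2 ‖w - u‖²`
and `γL ≤ 1` make every such `u` a global minimizer, and Banach's fixed point theorem for the
`γL`-contraction `u ↦ x - γ ∇φ₁ u` produces one. Hence `prox_{γφ₁} = (I + γ∇φ₁)⁻¹`, and
writing `s - s' = a + γ b` with `a = u - u'`, `b = ∇φ₁ u - ∇φ₁ u'`, `‖b‖ ≤ L‖a‖`, all the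
claims are elementary estimates on `a + γ b`. -/

section InnerProductSpace

variable {E : Type*} [NormedAddCommGroup E] [InnerProductSpace ℝ E]

theorem abs_sub_sub_inner_le_of_lipschitz_gradient [CompleteSpace E] {φ : E → ℝ} {g : E → E}
    {L : ℝ} (hφ : ∀ x, HasGradientAt φ (g x) x) (hg : ∀ x y, ‖g x - g y‖ ≤ L * ‖x - y‖)
    (x y : E) : |φ y - φ x - ⟪g x, y - x⟫| ≤ L / 2 * ‖y - x‖ ^ 2 := by
  set d := y - x
  have hline : ∀ t : ℝ, HasDerivAt (fun t : ℝ => φ (x + t • d)) ⟪g (x + t • d), d⟫ t := by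
    intro t
    have hpath : HasDerivAt (fun t : ℝ => x + t • d) d t := by
      simpa using ((hasDerivAt_id t).smul_const d).const_add x
    exact (hφ _).hasFDerivAt.comp_hasDerivAt t hpath
  have hrem : ∀ t : ℝ, HasDerivAt (fun t : ℝ => φ (x + t • d) - φ x - t * ⟪g x, d⟫)
      ⟪g (x + t • d) - g x, d⟫ t := by
    intro t
    rw [inner_sub_left]
    exact ((hline t).sub_const (φ x)).sub
      ((hasDerivAt_id' t).mul_const _ |>.congr_deriv (one_mul _))
  have hbound : ∀ t : ℝ, HasDerivAt (fun t : ℝ => L / 2 * t ^ 2 * ‖d‖ ^ 2) (L * t * ‖d‖ ^ 2) t := by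
    intro t
    exact (((hasDerivAt_pow 2 t).const_mul (L / 2)).mul_const _).congr_deriv (by ring)
  have key := image_norm_le_of_norm_deriv_right_le_deriv_boundary
    (fun t _ => (hrem t).continuousAt.continuousWithinAt) (fun t _ => (hrem t).hasDerivWithinAt)
    (by simp) hbound (fun t ht => ?_) (Set.right_mem_Icc.2 zero_le_one)
  · simpa [d] using key
  · calc ‖⟪g (x + t • d) - g x, d⟫‖ ≤ ‖g (x + t • d) - g x‖ * ‖d‖ := norm_inner_le_norm _ _
      _ ≤ L * ‖x + t • d - x‖ * ‖d‖ := by gcongr; exact hg _ _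
      _ = L * t * ‖d‖ ^ 2 := by
        rw [add_sub_cancel_left, norm_smul, Real.norm_of_nonneg ht.1]; ring

theorem IsLocalMin.eq_add_smul_of_hasGradientAt [CompleteSpace E] {φ : E → ℝ} {g x u : E}
    {γ : ℝ} (hmin : IsLocalMin (fun w => φ w + ‖w - x‖ ^ 2 / (2 * γ)) u)
    (hφ : HasGradientAt φ g u) (hγ : γ ≠ 0) : x = u + γ • g := by
  simp only [div_eq_inv_mul] at hmin
  have hD := hmin.hasFDerivAt_eq_zero
    (hφ.hasFDerivAt.add (((hasFDerivAt_id u).sub_const x).norm_sq.const_mul (2 * γ)⁻¹))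
  obtain ⟨v, hv⟩ : ∃ v, v = g + γ⁻¹ • (u - x) := ⟨_, rfl⟩
  have hDv := congrArg (fun D => D v) hD
  simp only [add_apply, InnerProductSpace.toDual_apply_apply,
    smul_apply, ContinuousLinearMap.comp_apply, innerSL_apply_apply,
    ContinuousLinearMap.id_apply, id, zero_apply, smul_eq_mul] at hDv
  have hvv : ⟪v, v⟫ = 0 := by
    nth_rw 1 [hv]
    rw [inner_add_left, real_inner_smul_left]
    linear_combination hDv
  have hv0 : v = 0 := inner_self_eq_zero.mp hvv
  have hγv : γ • v = γ • g + (u - x) := by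
    rw [hv, smul_add, smul_smul, mul_inv_cancel₀ hγ, one_smul]
  rw [hv0, smul_zero] at hγv
  linear_combination (norm := module) hγv

theorem exists_add_smul_eq_of_lipschitz [CompleteSpace E] {F : E → E} {L γ : ℝ}
    (hF : ∀ x y, ‖F x - F y‖ ≤ L * ‖x - y‖) (hL : 0 ≤ L) (hγ : 0 ≤ γ) (hγL : γ * L < 1)
    (x : E) : ∃ u, u + γ • F u = x := by
  have hT : ContractingWith ⟨γ * L, mul_nonneg hγ hL⟩ (fun u => x - γ • F u) := by
    refine ⟨hγL, LipschitzWith.of_dist_le_mul fun a b => ?_⟩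
    rw [dist_eq_norm, dist_eq_norm, sub_sub_sub_cancel_left, ← smul_sub, norm_smul,
      Real.norm_of_nonneg hγ, norm_sub_rev a b]
    change γ * ‖F b - F a‖ ≤ γ * L * ‖b - a‖
    rw [mul_assoc]
    exact mul_le_mul_of_nonneg_left (hF b a) hγ
  obtain ⟨u, hu, -⟩ := hT.exists_fixedPoint 0 (edist_ne_top _ _)
  have hu : x - γ • F u = u := hu
  exact ⟨u, by linear_combination (norm := module) -hu⟩

variable {a b : E} {γ L : ℝ}

theorem norm_add_smul_le_of_norm_le (hγ : 0 ≤ γ) (hb : ‖b‖ ≤ L * ‖a‖) :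
    ‖a + γ • b‖ ≤ (1 + γ * L) * ‖a‖ :=
  calc ‖a + γ • b‖ ≤ ‖a‖ + γ * ‖b‖ := by
        simpa [norm_smul, Real.norm_of_nonneg hγ] using norm_add_le a (γ • b)
    _ ≤ (1 + γ * L) * ‖a‖ := by nlinarith [mul_le_mul_of_nonneg_left hb hγ]

theorem mul_norm_le_norm_add_smul_of_norm_le (hγ : 0 ≤ γ) (hb : ‖b‖ ≤ L * ‖a‖) :
    (1 - γ * L) * ‖a‖ ≤ ‖a + γ • b‖ :=
  calc (1 - γ * L) * ‖a‖ ≤ ‖a‖ - γ * ‖b‖ := by nlinarith [mul_le_mul_of_nonneg_left hb hγ]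
    _ ≤ ‖a + γ • b‖ := by
        simpa [norm_smul, Real.norm_of_nonneg hγ] using norm_sub_norm_le a (-(γ • b))

theorem norm_add_smul_sq_le_mul_inner_of_norm_le (hγ : 0 ≤ γ) (hγL : γ * L ≤ 1)
    (hb : ‖b‖ ≤ L * ‖a‖) : ‖a + γ • b‖ ^ 2 ≤ (1 + γ * L) * ⟪a, a + γ • b⟫ := by
  have hexpand : ‖a + γ • b‖ ^ 2 = ‖a‖ ^ 2 + 2 * γ * ⟪a, b⟫ + γ ^ 2 * ‖b‖ ^ 2 := by
    rw [norm_add_sq_real, real_inner_smul_right, norm_smul, Real.norm_of_nonneg hγ]; ring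
  have hinner : ⟪a, a + γ • b⟫ = ‖a‖ ^ 2 + γ * ⟪a, b⟫ := by
    rw [inner_add_right, real_inner_smul_right, real_inner_self_eq_norm_sq]
  have hcs : (1 - γ * L) * ⟪a, b⟫ ≤ (1 - γ * L) * (‖a‖ * ‖b‖) :=
    mul_le_mul_of_nonneg_left (real_inner_le_norm a b) (by linarith)
  have hb' : γ * ‖b‖ * ‖b‖ ≤ γ * ‖b‖ * (L * ‖a‖) :=
    mul_le_mul_of_nonneg_left hb (by positivity)
  -- the gap is `γ (L‖a‖² - (1 - γL)⟪a, b⟫ - γ‖b‖²)`; `hcs` and `hb'` bound the two subtracted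
  -- terms by `(1 - γL)‖a‖‖b‖` and `γL‖a‖‖b‖`, which add up to `‖a‖‖b‖ ≤ L‖a‖²`
  rw [hexpand, hinner]
  nlinarith [mul_le_mul_of_nonneg_left hb (norm_nonneg a)]

end InnerProductSpace

section Prox

variable {n : ℕ} {φ : EuclideanSpace ℝ (Fin n) → ℝ} {γ : ℝ} {x u : EuclideanSpace ℝ (Fin n)}

theorem IsProxR.eq_add_smul {g : EuclideanSpace ℝ (Fin n)} (hu : IsProxR φ γ x u)
    (hφ : HasGradientAt φ g u) (hγ : γ ≠ 0) : x = u + γ • g :=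
  have hmin : IsMinOn (fun w => φ w + ‖w - x‖ ^ 2 / (2 * γ)) Set.univ u :=
    isMinOn_univ_iff.mpr hu
  (hmin.isLocalMin Filter.univ_mem).eq_add_smul_of_hasGradientAt hφ hγ

theorem isProxR_of_eq_add_smul {g : EuclideanSpace ℝ (Fin n) → EuclideanSpace ℝ (Fin n)} {L : ℝ}
    (hφ : ∀ x, HasGradientAt φ (g x) x) (hg : ∀ x y, ‖g x - g y‖ ≤ L * ‖x - y‖)
    (hγ : 0 < γ) (hγL : γ * L ≤ 1) (hx : x = u + γ • g u) : IsProxR φ γ x u := by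
  intro w
  have hlower : φ u + ⟪g u, w - u⟫ - L / 2 * ‖w - u‖ ^ 2 ≤ φ w := by
    have := abs_sub_sub_inner_le_of_lipschitz_gradient hφ hg u w
    linarith [neg_abs_le (φ w - φ u - ⟪g u, w - u⟫)]
  have hquad : L / 2 * ‖w - u‖ ^ 2 ≤ ‖w - u‖ ^ 2 / (2 * γ) := by
    rw [le_div_iff₀ (by positivity)]
    nlinarith [sq_nonneg ‖w - u‖]
  have hwx : ‖w - x‖ ^ 2 / (2 * γ) =
      ‖w - u‖ ^ 2 / (2 * γ) - ⟪g u, w - u⟫ + ‖u - x‖ ^ 2 / (2 * γ) := by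
    have hsplit : w - x = (w - u) + -(γ • g u) := by rw [hx]; abel
    rw [hsplit, norm_add_sq_real, inner_neg_right, real_inner_smul_right, real_inner_comm,
      show u - x = -(γ • g u) by rw [hx]; abel]
    field_simp
    ring
  linarith

end Prox

theorem prox_strongly_monotone_general {n : ℕ} (φ₁ : EuclideanSpace ℝ (Fin n) → ℝ)
    (f' : EuclideanSpace ℝ (Fin n) → EuclideanSpace ℝ (Fin n)) (L : ℝ)
    (hdiff : ∀ x, HasGradientAt φ₁ (f' x) x)
    (hlip : ∀ x y, ‖f' x - f' y‖ ≤ L * ‖x - y‖)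
    (γ : ℝ) (hγ0 : 0 < γ) (hγ : γ < 1 / L) :
    (∀ x, ∃ u, IsProxR φ₁ γ x u) ∧
    (∀ x u u', IsProxR φ₁ γ x u → IsProxR φ₁ γ x u' → u = u') ∧
    (∀ s s' u u', IsProxR φ₁ γ s u → IsProxR φ₁ γ s' u' →
      (1 / (1 + γ * L)) * ‖s - s'‖ ^ 2 ≤ ⟪u - u', s - s'⟫ ∧
      (1 / (1 + γ * L)) * ‖s - s'‖ ≤ ‖u - u'‖) := by
  have hL : 0 < L := one_div_pos.mp (hγ0.trans hγ)
  have hγL : γ * L < 1 := (lt_div_iff₀ hL).mp hγ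
  have hsub : ∀ s s' u u', IsProxR φ₁ γ s u → IsProxR φ₁ γ s' u' →
      s - s' = (u - u') + γ • (f' u - f' u') := by
    intro s s' u u' hu hu'
    rw [hu.eq_add_smul (hdiff u) hγ0.ne', hu'.eq_add_smul (hdiff u') hγ0.ne']
    module
  refine ⟨fun x => ?_, fun x u u' hu hu' => ?_, fun s s' u u' hu hu' => ⟨?_, ?_⟩⟩
  · obtain ⟨u, hu⟩ := exists_add_smul_eq_of_lipschitz hlip hL.le hγ0.le hγL x
    exact ⟨u, isProxR_of_eq_add_smul hdiff hlip hγ0 hγL.le hu.symm⟩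
  · have h := mul_norm_le_norm_add_smul_of_norm_le hγ0.le (hlip u u')
    rw [← hsub x x u u' hu hu', sub_self, norm_zero] at h
    have hnorm : ‖u - u'‖ ≤ 0 := nonpos_of_mul_nonpos_right h (sub_pos.2 hγL)
    exact sub_eq_zero.mp (norm_le_zero_iff.mp hnorm)
  · rw [hsub s s' u u' hu hu', one_div_mul_eq_div, div_le_iff₀' (by positivity)]
    exact norm_add_smul_sq_le_mul_inner_of_norm_le hγ0.le hγL.le (hlip u u')
  · rw [hsub s s' u u' hu hu', one_div_mul_eq_div, div_le_iff₀' (by positivity)]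
    exact norm_add_smul_le_of_norm_le hγ0.le (hlip u u')

/-- `prox_{γφ₁}` is single-valued and `(1/(1+γL))`-strongly monotone for `0 < γ < 1/L`. -/
theorem prox_strongly_monotone {n : ℕ} (φ₁ : EuclideanSpace ℝ (Fin n) → ℝ)
    (f' : EuclideanSpace ℝ (Fin n) → EuclideanSpace ℝ (Fin n)) (L : ℝ) (hL : 0 < L)
    (hdiff : ∀ x, HasGradientAt φ₁ (f' x) x)
    (hlip : ∀ x y, ‖f' x - f' y‖ ≤ L * ‖x - y‖)
    (γ : ℝ) (hγ0 : 0 < γ) (hγ : γ < 1 / L) :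
    (∀ x, ∃ u, IsProxR φ₁ γ x u) ∧
    (∀ x u u', IsProxR φ₁ γ x u → IsProxR φ₁ γ x u' → u = u') ∧
    (∀ s s' u u', IsProxR φ₁ γ s u → IsProxR φ₁ γ s' u' →
      (1 / (1 + γ * L)) * ‖s - s'‖ ^ 2 ≤ ⟪u - u', s - s'⟫ ∧
      (1 / (1 + γ * L)) * ‖s - s'‖ ≤ ‖u - u'‖) :=
  prox_strongly_monotone_general φ₁ f' L hdiff hlip γ hγ0 hγ
end

section
/- Let φ₁ : ℝᵖ → ℝ be differentiable with L-Lipschitz gradient and 0 < γ < 1/L. Then prox_{γφ₁} is (1/(1−γL))-Lipschitz continuous: ‖prox_{γφ₁}(s) − prox_{γφ₁}(s')‖ ≤ (1/(1−γL))‖s−s'‖ for all s, s' ∈ ℝᵖ. -/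
open scoped RealInnerProductSpace
open Filter Topology

/-- First-order optimality condition for the prox of a differentiable function. -/
lemma prox_first_order {n : ℕ} (φ₁ : EuclideanSpace ℝ (Fin n) → ℝ)
    (f' : EuclideanSpace ℝ (Fin n) → EuclideanSpace ℝ (Fin n))
    (hdiff : ∀ x, HasGradientAt φ₁ (f' x) x)
    (γ : ℝ) (hγ0 : 0 < γ) (x u : EuclideanSpace ℝ (Fin n))
    (hu : IsProxR φ₁ γ x u) : γ • f' u = x - u := by
  set g : EuclideanSpace ℝ (Fin n) → ℝ := fun w => φ₁ w + ‖w - x‖ ^ 2 / (2 * γ) with hg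
  have hmin : IsLocalMin g u := Filter.Eventually.of_forall (fun w => hu w)
  -- derivative of the quadratic part
  have hsub : HasFDerivAt (fun w : EuclideanSpace ℝ (Fin n) => w - x)
      (ContinuousLinearMap.id ℝ _) u := (hasFDerivAt_id u).sub_const x
  have hinner := (hsub.inner ℝ hsub)
  have hq : HasFDerivAt (fun w : EuclideanSpace ℝ (Fin n) => ‖w - x‖ ^ 2 / (2 * γ))
      ((2 * γ)⁻¹ • ((fderivInnerCLM ℝ (u - x, u - x)).comp
        ((ContinuousLinearMap.id ℝ _).prod (ContinuousLinearMap.id ℝ _)))) u := by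
    have : (fun w : EuclideanSpace ℝ (Fin n) => ‖w - x‖ ^ 2 / (2 * γ)) =
        (fun w => (2 * γ)⁻¹ * ⟪w - x, w - x⟫) := by
      funext w
      rw [real_inner_self_eq_norm_sq]
      ring
    rw [this]
    exact hinner.const_mul _
  have hgder : HasFDerivAt g
      ((InnerProductSpace.toDual ℝ _ (f' u)) + (2 * γ)⁻¹ •
        ((fderivInnerCLM ℝ (u - x, u - x)).comp
          ((ContinuousLinearMap.id ℝ _).prod (ContinuousLinearMap.id ℝ _)))) u :=
    ((hdiff u).hasFDerivAt).add hq
  have hzero := hmin.hasFDerivAt_eq_zero hgder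
  have hγne : γ ≠ 0 := ne_of_gt hγ0
  have happ : ∀ t : EuclideanSpace ℝ (Fin n),
      ⟪f' u, t⟫ + (2 * γ)⁻¹ * (⟪u - x, t⟫ + ⟪t, u - x⟫) = 0 := by
    intro t
    have := congrFun (congrArg DFunLike.coe hzero) t
    simpa [InnerProductSpace.toDual_apply_apply, fderivInnerCLM_apply] using this
  have hkey : ∀ t : EuclideanSpace ℝ (Fin n), ⟪f' u + γ⁻¹ • (u - x), t⟫ = 0 := by
    intro t
    have h1 := happ t
    have h2 : ⟪t, u - x⟫ = ⟪u - x, t⟫ := (real_inner_comm t (u - x)).symm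
    rw [h2] at h1
    rw [inner_add_left, inner_smul_left]
    have h3 : (2 * γ)⁻¹ * (⟪u - x, t⟫ + ⟪u - x, t⟫) = γ⁻¹ * ⟪u - x, t⟫ := by
      field_simp; ring
    simp only [starRingEnd_apply, star_trivial]
    linarith
  have hv : f' u + γ⁻¹ • (u - x) = 0 := by
    have := hkey (f' u + γ⁻¹ • (u - x))
    exact inner_self_eq_zero.mp this
  have : f' u = γ⁻¹ • (x - u) := by
    have := eq_neg_of_add_eq_zero_left hv
    rw [this, ← smul_neg, neg_sub]
  rw [this, smul_smul, mul_inv_cancel₀ hγne, one_smul]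

/-- `prox_{γφ₁}` is `(1/(1−γL))`-Lipschitz continuous for `0 < γ < 1/L`. -/
theorem prox_lipschitz {n : ℕ} (φ₁ : EuclideanSpace ℝ (Fin n) → ℝ)
    (f' : EuclideanSpace ℝ (Fin n) → EuclideanSpace ℝ (Fin n)) (L : ℝ) (hL : 0 < L)
    (hdiff : ∀ x, HasGradientAt φ₁ (f' x) x)
    (hlip : ∀ x y, ‖f' x - f' y‖ ≤ L * ‖x - y‖)
    (γ : ℝ) (hγ0 : 0 < γ) (hγ : γ < 1 / L)
    (s s' u u' : EuclideanSpace ℝ (Fin n))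
    (hu : IsProxR φ₁ γ s u) (hu' : IsProxR φ₁ γ s' u') :
    ‖u - u'‖ ≤ (1 / (1 - γ * L)) * ‖s - s'‖ := by
  have h1 : γ • f' u = s - u := prox_first_order φ₁ f' hdiff γ hγ0 s u hu
  have h2 : γ • f' u' = s' - u' := prox_first_order φ₁ f' hdiff γ hγ0 s' u' hu'
  have hγL : γ * L < 1 := by
    rw [lt_div_iff₀ hL] at hγ
    linarith
  have hpos : 0 < 1 - γ * L := by linarith
  have hdecomp : u - u' = (s - s') - γ • (f' u - f' u') := by
    rw [smul_sub, h1, h2]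
    abel
  have hineq : ‖u - u'‖ ≤ ‖s - s'‖ + γ * L * ‖u - u'‖ := by
    calc ‖u - u'‖ = ‖(s - s') - γ • (f' u - f' u')‖ := by rw [← hdecomp]
      _ ≤ ‖s - s'‖ + ‖γ • (f' u - f' u')‖ := norm_sub_le _ _
      _ = ‖s - s'‖ + γ * ‖f' u - f' u'‖ := by
          rw [norm_smul, Real.norm_eq_abs, abs_of_pos hγ0]
      _ ≤ ‖s - s'‖ + γ * (L * ‖u - u'‖) := by
          have := hlip u u'
          nlinarith
      _ = ‖s - s'‖ + γ * L * ‖u - u'‖ := by ring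
  rw [div_mul_eq_mul_div, le_div_iff₀ hpos]
  nlinarith
end

section
/- Let R : ℝᵖ → ℝᵖ be a map, s⋆ ∈ ℝᵖ with R(s⋆) = 0, and suppose R is strictly differentiable at s⋆ with nonsingular Jacobian G = JR(s⋆). Let sᵏ → s⋆ and dᵏ ∈ ℝᵖ with dᵏ ≠ 0 be sequences such that lim_k ‖R(sᵏ) + G dᵏ‖ / ‖dᵏ‖ = 0 (Dennis–Moré condition). Then lim_k ‖sᵏ + dᵏ − s⋆‖ / ‖sᵏ − s⋆‖ = 0, i.e. the dᵏ are superlinear directions relative to (sᵏ). -/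
open scoped RealInnerProductSpace
open Filter Topology

/-- Dennis–Moré criterion: directions satisfying the Dennis–Moré condition are superlinear. -/
theorem dennis_more_superlinear {n : ℕ}
    (R : EuclideanSpace ℝ (Fin n) → EuclideanSpace ℝ (Fin n))
    (sstar : EuclideanSpace ℝ (Fin n)) (hzero : R sstar = 0)
    (G : EuclideanSpace ℝ (Fin n) →L[ℝ] EuclideanSpace ℝ (Fin n))
    (hGbij : Function.Bijective G)
    -- strict differentiability of `R` at `s⋆` with Jacobian `G`
    (hstrict : ∀ ε : ℝ, 0 < ε → ∃ δ : ℝ, 0 < δ ∧ ∀ x y : EuclideanSpace ℝ (Fin n),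
      ‖x - sstar‖ < δ → ‖y - sstar‖ < δ → ‖R x - R y - G (x - y)‖ ≤ ε * ‖x - y‖)
    (s d : ℕ → EuclideanSpace ℝ (Fin n))
    (hs : Tendsto s atTop (nhds sstar))
    (hsne : ∀ k, s k ≠ sstar) (hdne : ∀ k, d k ≠ 0)
    (hDM : Tendsto (fun k => ‖R (s k) + G (d k)‖ / ‖d k‖) atTop (nhds 0)) :
    Tendsto (fun k => ‖s k + d k - sstar‖ / ‖s k - sstar‖) atTop (nhds 0) := by
  classical
  set e : EuclideanSpace ℝ (Fin n) ≃L[ℝ] EuclideanSpace ℝ (Fin n) :=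
    (LinearEquiv.ofBijective G.toLinearMap hGbij).toContinuousLinearEquiv with he_def
  have he : ∀ x, e x = G x := fun x => rfl
  set C : ℝ := max ‖(e.symm : EuclideanSpace ℝ (Fin n) →L[ℝ] EuclideanSpace ℝ (Fin n))‖ 1
    with hCdef
  have hC1 : (1 : ℝ) ≤ C := le_max_right _ _
  have hCpos : (0 : ℝ) < C := lt_of_lt_of_le one_pos hC1
  have hbound : ∀ x : EuclideanSpace ℝ (Fin n), ‖x‖ ≤ C * ‖G x‖ := by
    intro x
    have hx : e.symm (G x) = x := by rw [← he]; exact e.symm_apply_apply x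
    calc ‖x‖ = ‖e.symm (G x)‖ := by rw [hx]
      _ ≤ ‖(e.symm : EuclideanSpace ℝ (Fin n) →L[ℝ] EuclideanSpace ℝ (Fin n))‖ * ‖G x‖ :=
        (e.symm : EuclideanSpace ℝ (Fin n) →L[ℝ] EuclideanSpace ℝ (Fin n)).le_opNorm _
      _ ≤ C * ‖G x‖ := mul_le_mul_of_nonneg_right (le_max_left _ _) (norm_nonneg _)
  rw [Metric.tendsto_atTop]
  intro ε0 hε0
  have hεpos : 0 < ε0 / (5 * C) := by positivity
  obtain ⟨δ, hδpos, hδ⟩ := hstrict (ε0 / (5 * C)) hεpos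
  have hc2pos : 0 < min (ε0 / (4 * C)) (1 / (2 * C)) := by positivity
  have h1 : ∀ᶠ k in atTop, ‖s k - sstar‖ < δ := by
    have := hs (Metric.ball_mem_nhds sstar hδpos)
    filter_upwards [this] with k hk
    simpa [Metric.mem_ball, dist_eq_norm] using hk
  have h2 : ∀ᶠ k in atTop, ‖R (s k) + G (d k)‖ / ‖d k‖ < min (ε0 / (4 * C)) (1 / (2 * C)) :=
    hDM (Iio_mem_nhds hc2pos)
  rw [Filter.eventually_atTop] at h1 h2
  obtain ⟨N1, hN1⟩ := h1
  obtain ⟨N2, hN2⟩ := h2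
  refine ⟨max N1 N2, fun k hk => ?_⟩
  have hk1 := hN1 k (le_trans (le_max_left _ _) hk)
  have hk2 := hN2 k (le_trans (le_max_right _ _) hk)
  set A := ‖s k + d k - sstar‖ with hA
  set B := ‖s k - sstar‖ with hB
  set D := ‖d k‖ with hD
  have hBpos : 0 < B := norm_pos_iff.mpr (sub_ne_zero.mpr (hsne k))
  have hDpos : 0 < D := norm_pos_iff.mpr (hdne k)
  have hAnn : 0 ≤ A := norm_nonneg _
  -- strict differentiability estimate
  have hq : ‖R (s k) - G (s k - sstar)‖ ≤ (ε0 / (5 * C)) * B := by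
    have := hδ (s k) sstar hk1 (by simpa using hδpos)
    simpa [hzero] using this
  -- Dennis-Moré estimate
  have hr : ‖R (s k) + G (d k)‖ < min (ε0 / (4 * C)) (1 / (2 * C)) * D := by
    rw [div_lt_iff₀ hDpos] at hk2
    exact hk2
  -- decomposition
  have hGsum : G (s k + d k - sstar) = (R (s k) + G (d k)) - (R (s k) - G (s k - sstar)) := by
    have h : s k + d k - sstar = (s k - sstar) + d k := by abel
    rw [h, map_add]; abel
  have hAle : A ≤ C * (‖R (s k) + G (d k)‖ + ‖R (s k) - G (s k - sstar)‖) := by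
    calc A ≤ C * ‖G (s k + d k - sstar)‖ := hbound _
      _ ≤ C * (‖R (s k) + G (d k)‖ + ‖R (s k) - G (s k - sstar)‖) := by
          rw [hGsum]
          exact mul_le_mul_of_nonneg_left (norm_sub_le _ _) (le_of_lt hCpos)
  have hDle : D ≤ A + B := by
    have h : d k = (s k + d k - sstar) - (s k - sstar) := by abel
    calc D = ‖(s k + d k - sstar) - (s k - sstar)‖ := by rw [← h]
      _ ≤ A + B := norm_sub_le _ _
  -- combine
  have hmin1 : min (ε0 / (4 * C)) (1 / (2 * C)) ≤ ε0 / (4 * C) := min_le_left _ _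
  have hmin2 : min (ε0 / (4 * C)) (1 / (2 * C)) ≤ 1 / (2 * C) := min_le_right _ _
  set m : ℝ := min (ε0 / (4 * C)) (1 / (2 * C)) with hm
  have hmnn : 0 ≤ C * m := by positivity
  have hm1 : C * m ≤ ε0 / 4 := by
    calc C * m ≤ C * (ε0 / (4 * C)) := mul_le_mul_of_nonneg_left hmin1 hCpos.le
      _ = ε0 / 4 := by field_simp
  have hm2 : C * m ≤ 1 / 2 := by
    calc C * m ≤ C * (1 / (2 * C)) := mul_le_mul_of_nonneg_left hmin2 hCpos.le
      _ = 1 / 2 := by field_simp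
  have key : A < ε0 * B := by
    have hCr : C * ‖R (s k) + G (d k)‖ < C * m * D := by
      have := mul_lt_mul_of_pos_left hr hCpos
      linarith [this, (mul_assoc C m D).symm.le]
    have hCq : C * ‖R (s k) - G (s k - sstar)‖ ≤ ε0 / 5 * B := by
      have h1 := mul_le_mul_of_nonneg_left hq hCpos.le
      have h2 : C * (ε0 / (5 * C) * B) = ε0 / 5 * B := by field_simp
      linarith
    have hD2 : C * m * D ≤ C * m * (A + B) := mul_le_mul_of_nonneg_left hDle hmnn
    have hA2 : C * m * A ≤ 1 / 2 * A := mul_le_mul_of_nonneg_right hm2 hAnn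
    have hB2 : C * m * B ≤ ε0 / 4 * B := mul_le_mul_of_nonneg_right hm1 hBpos.le
    linarith [hAle, hCr, hCq, hD2, hA2, hB2, hBpos, hε0]
  have : A / B < ε0 := (div_lt_iff₀ hBpos).mpr (by linarith [key])
  rw [Real.dist_eq, sub_zero, abs_of_nonneg (div_nonneg hAnn (le_of_lt hBpos))]
  exact this
end

section
/- Let f : ℝᵐ → ℝ ∪ {∞} be proper, lsc, and μ-strongly convex, and let A ∈ ℝ^{p×m} with A ≠ 0. Then the epicomposition (A f)(s) := inf{ f(x) : Ax = s } is (μ/‖A‖²)-strongly convex on its domain, where ‖A‖ is the operator norm. -/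
open scoped RealInnerProductSpace
open Filter Topology

/-!
Write strong convexity as `f (a • x + b • y) ≤ a f x + b f y - a b (μ/2) ‖x - y‖²`.
If `A x = s₁` and `A y = s₂`, then `‖s₁ - s₂‖ ≤ ‖A‖ ‖x - y‖`, so the right-hand side is at most
the same expression with `μ / ‖A‖²` and `‖s₁ - s₂‖` in place of `μ` and `‖x - y‖`, while the
left-hand side is at least the value of the epicomposition at `a • s₁ + b • s₂`; taking infima
over `x` and `y` gives the claim. Infima of sums in `EReal` only behave when nothing is `⊥`:
a proper, lower semicontinuous, strongly convex `f` is bounded below, because along a chord from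
a point near which `f` is bounded, the quadratic term beats the linear decrease.
-/

lemma norm_smul_add_smul_sq {E : Type*} [NormedAddCommGroup E] [InnerProductSpace ℝ E]
    {a b : ℝ} (hab : a + b = 1) (x y : E) :
    ‖a • x + b • y‖ ^ 2 = a * ‖x‖ ^ 2 + b * ‖y‖ ^ 2 - a * b * ‖x - y‖ ^ 2 := by
  obtain rfl := eq_sub_of_add_eq' hab
  simp only [← real_inner_self_eq_norm_sq, inner_add_add_self, inner_sub_sub_self,
    real_inner_smul_left, real_inner_smul_right, real_inner_comm x y]
  ring

lemma ContinuousLinearMap.div_opNorm_sq_mul_norm_apply_sq_le {E F : Type*}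
    [SeminormedAddCommGroup E] [SeminormedAddCommGroup F] [NormedSpace ℝ E] [NormedSpace ℝ F]
    (A : E →L[ℝ] F) {μ : ℝ} (hμ : 0 ≤ μ) (v : E) :
    μ / ‖A‖ ^ 2 * ‖A v‖ ^ 2 ≤ μ * ‖v‖ ^ 2 := by
  rcases (norm_nonneg A).eq_or_lt with hA | hA
  · simp only [← hA, ne_eq, OfNat.ofNat_ne_zero, not_false_eq_true, zero_pow, div_zero, zero_mul]
    positivity
  rw [div_mul_eq_mul_div, div_le_iff₀ (by positivity), mul_assoc, mul_comm (‖v‖ ^ 2), ← mul_pow]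
  gcongr
  exact A.le_opNorm v

namespace EReal

lemma coe_mul_iInf {ι : Sort*} {a : ℝ} (ha : 0 < a) (u : ι → EReal) :
    (a : EReal) * ⨅ i, u i = ⨅ i, (a : EReal) * u i := by
  have ha' : (0 : EReal) ≤ a := by exact_mod_cast ha.le
  refine le_antisymm (le_iInf fun i => mul_le_mul_of_nonneg_left (iInf_le u i) ha') ?_
  have cancel : ∀ {r s : ℝ}, r * s = 1 → ∀ X : EReal, (r : EReal) * (s * X) = X :=
    fun hrs X => by rw [← mul_assoc, ← coe_mul, hrs, coe_one, one_mul]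
  calc ⨅ i, (a : EReal) * u i = a * ((a⁻¹ : ℝ) * ⨅ i, (a : EReal) * u i) :=
        (cancel (mul_inv_cancel₀ ha.ne') _).symm
    _ ≤ a * ⨅ i, u i := by
      gcongr
      refine le_iInf fun i => ?_
      calc ((a⁻¹ : ℝ) : EReal) * ⨅ i, (a : EReal) * u i ≤ (a⁻¹ : ℝ) * (a * u i) := by
            gcongr
            exact iInf_le _ i
        _ = u i := cancel (inv_mul_cancel₀ ha.ne') _

lemma le_iInf_add_iInf {ι κ : Sort*} {u : ι → EReal} {v : κ → EReal} {c : EReal}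
    (hu : ⨅ i, u i ≠ ⊥) (hv : ⨅ j, v j ≠ ⊥) (h : ∀ i j, c ≤ u i + v j) :
    c ≤ (⨅ i, u i) + ⨅ j, v j := by
  refine le_add_of_forall_gt (.inl hu) (.inr hv) fun a ha b hb => ?_
  obtain ⟨i, hi⟩ := iInf_lt_iff.1 ha
  obtain ⟨j, hj⟩ := iInf_lt_iff.1 hb
  exact (h i j).trans (add_le_add hi.le hj.le)

end EReal

lemma lower_bound_of_chord_ineq {μ δ R t₀ s : ℝ} (hμ : 0 < μ) (hδ : 0 < δ) (hR : δ ≤ R)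
    (h : t₀ - 1 < (1 - δ / (2 * R)) * t₀ + δ / (2 * R) * s
      - (1 - δ / (2 * R)) * (δ / (2 * R)) * (μ / 2) * R ^ 2) :
    t₀ - 1 - 4 / (μ * δ ^ 2) ≤ s := by
  have hRpos : 0 < R := hδ.trans_le hR
  have hdiv : 0 < s - t₀ + 2 * R / δ - (1 - δ / (2 * R)) * (μ / 2) * R ^ 2 := by
    have e : δ / (2 * R) * (s - t₀ + 2 * R / δ - (1 - δ / (2 * R)) * (μ / 2) * R ^ 2)
        = (1 - δ / (2 * R)) * t₀ + δ / (2 * R) * s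
          - (1 - δ / (2 * R)) * (δ / (2 * R)) * (μ / 2) * R ^ 2 - (t₀ - 1) := by
      field_simp; ring
    exact pos_of_mul_pos_right (e ▸ sub_pos.2 h) (by positivity)
  have hquad : μ / 4 * R ^ 2 ≤ (1 - δ / (2 * R)) * (μ / 2) * R ^ 2 := by
    have : δ / (2 * R) ≤ 1 / 2 := by rw [div_le_div_iff₀ (by positivity) two_pos]; linarith
    have : 0 ≤ μ * R ^ 2 := by positivity
    nlinarith
  have hamgm : 2 * R / δ ≤ μ / 4 * R ^ 2 + 4 / (μ * δ ^ 2) := by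
    have e : μ / 4 * R ^ 2 + 4 / (μ * δ ^ 2) - 2 * R / δ
        = (μ * δ * R - 4) ^ 2 / (4 * μ * δ ^ 2) := by
      field_simp; ring
    have : 0 ≤ (μ * δ * R - 4) ^ 2 / (4 * μ * δ ^ 2) := by positivity
    linarith
  linarith

noncomputable def epicomp {α β : Type*} (A : α → β) (f : α → EReal) (s : β) : EReal :=
  ⨅ x : {x // A x = s}, f x.val

section

variable {n : ℕ} {μ : ℝ} {f : EuclideanSpace ℝ (Fin n) → EReal}

lemma eStrongConvexOn_iff : EStrongConvexOn μ f ↔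
    ∀ x y : EuclideanSpace ℝ (Fin n), ∀ a b : ℝ, 0 ≤ a → 0 ≤ b → a + b = 1 →
      f (a • x + b • y) ≤ (a : EReal) * f x + (b : EReal) * f y
        - ((a * b * (μ / 2) * ‖x - y‖ ^ 2 : ℝ) : EReal) := by
  refine forall₄_congr fun x y a b => forall₃_congr fun ha hb hab => ?_
  set q := a * b * (μ / 2) * ‖x - y‖ ^ 2 with hq
  set r := μ / 2 * ‖a • x + b • y‖ ^ 2 with hr
  have split : (a : EReal) * (f x - ((μ / 2 * ‖x‖ ^ 2 : ℝ) : EReal))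
      + (b : EReal) * (f y - ((μ / 2 * ‖y‖ ^ 2 : ℝ) : EReal))
      = (a : EReal) * f x + (b : EReal) * f y - ((q + r : ℝ) : EReal) := by
    rw [EReal.mul_sub_of_nonneg_of_ne_top (EReal.coe_nonneg.2 ha) (EReal.coe_ne_top a),
      EReal.mul_sub_of_nonneg_of_ne_top (EReal.coe_nonneg.2 hb) (EReal.coe_ne_top b),
      ← EReal.coe_mul, ← EReal.coe_mul,
      ← EReal.add_sub_add_comm (.inl (EReal.coe_ne_bot _)) (.inl (EReal.coe_ne_top _)),
      ← EReal.coe_add, hq, hr, norm_smul_add_smul_sq hab]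
    ring_nf
  have cancel : ∀ W : EReal, W - ((q + r : ℝ) : EReal) + r = W - q := fun W => by
    rw [sub_eq_add_neg, sub_eq_add_neg, ← EReal.coe_neg, ← EReal.coe_neg, add_assoc,
      ← EReal.coe_add, neg_add, neg_add_cancel_right]
  rw [split, EReal.sub_le_iff_le_add (.inl (EReal.coe_ne_bot _)) (.inl (EReal.coe_ne_top _)),
    cancel]

lemma EStrongConvexOn.coe_le_of_lt_on_ball (hsc : EStrongConvexOn μ f) (hμ : 0 < μ)
    {x₀ : EuclideanSpace ℝ (Fin n)} {t₀ δ : ℝ} (hx₀ : f x₀ = t₀) (hδ : 0 < δ)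
    (hball : ∀ z ∈ Metric.ball x₀ δ, ((t₀ - 1 : ℝ) : EReal) < f z)
    (x : EuclideanSpace ℝ (Fin n)) :
    ((t₀ - 1 - 4 / (μ * δ ^ 2) : ℝ) : EReal) ≤ f x := by
  by_cases hx : x ∈ Metric.ball x₀ δ
  · refine le_trans (EReal.coe_le_coe_iff.2 ?_) (hball x hx).le
    have : 0 ≤ 4 / (μ * δ ^ 2) := by positivity
    linarith
  set R := ‖x - x₀‖ with hR
  have hδR : δ ≤ R := by simpa [dist_eq_norm] using hx
  have hRpos : 0 < R := hδ.trans_le hδR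
  set t := δ / (2 * R) with ht
  have ht0 : 0 < t := by positivity
  have ht1 : t ≤ 1 := by rw [div_le_one (by positivity)]; linarith
  have hz : (1 - t) • x₀ + t • x ∈ Metric.ball x₀ δ := by
    have : (1 - t) • x₀ + t • x - x₀ = t • (x - x₀) := by module
    have htR : t * R = δ / 2 := by rw [ht]; field_simp
    rw [Metric.mem_ball, dist_eq_norm, this, norm_smul, Real.norm_of_nonneg ht0.le, ← hR, htR]
    linarith
  have hchord := eStrongConvexOn_iff.1 hsc x₀ x (1 - t) t (by linarith) ht0.le (by ring)
  rw [hx₀, norm_sub_rev, ← hR] at hchord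
  have hlt := (hball _ hz).trans_le hchord
  induction hfx : f x using EReal.rec with
  | bot => simp [hfx, EReal.coe_mul_bot_of_pos ht0] at hlt
  | top => exact le_top
  | coe s =>
    rw [hfx] at hlt
    norm_cast at hlt
    exact EReal.coe_le_coe_iff.2 (lower_bound_of_chord_ineq hμ hδ hδR hlt)

lemma EStrongConvexOn.exists_forall_coe_le (hsc : EStrongConvexOn μ f) (hμ : 0 < μ)
    (hproper : ProperFn f) (hlsc : LowerSemicontinuous f) :
    ∃ L : ℝ, ∀ x, (L : EReal) ≤ f x := by
  obtain ⟨⟨x₀, hx₀⟩, hbot⟩ := hproper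
  lift f x₀ to ℝ using ⟨hx₀, hbot x₀⟩ with t₀ ht₀
  have hlt : ((t₀ - 1 : ℝ) : EReal) < f x₀ := ht₀ ▸ EReal.coe_lt_coe_iff.2 (sub_one_lt t₀)
  have hnear : ∀ᶠ z in 𝓝 x₀, ((t₀ - 1 : ℝ) : EReal) < f z := hlsc x₀ _ hlt
  obtain ⟨δ, hδ, hball⟩ := Metric.eventually_nhds_iff_ball.1 hnear
  exact ⟨_, hsc.coe_le_of_lt_on_ball hμ ht₀.symm hδ hball⟩

theorem EStrongConvexOn.epicomp {p : ℕ} {L : ℝ} (hsc : EStrongConvexOn μ f)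
    (hL : ∀ x, (L : EReal) ≤ f x) (hμ : 0 ≤ μ)
    (A : EuclideanSpace ℝ (Fin n) →L[ℝ] EuclideanSpace ℝ (Fin p)) :
    EStrongConvexOn (μ / ‖A‖ ^ 2) (epicomp A f) := by
  rw [eStrongConvexOn_iff] at hsc ⊢
  intro s₁ s₂ a b ha hb hab
  rcases ha.eq_or_lt with rfl | ha
  · obtain rfl : b = 1 := by linarith
    simp
  rcases hb.eq_or_lt with rfl | hb
  · obtain rfl : a = 1 := by linarith
    simp
  have hne_bot : ∀ (c : ℝ) (s), 0 < c → ⨅ x : {x // A x = s}, (c : EReal) * f x ≠ ⊥ :=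
    fun c s hc => ne_bot_of_le_ne_bot (EReal.coe_ne_bot (c * L)) <| le_iInf fun x => by
      rw [EReal.coe_mul]; exact mul_le_mul_of_nonneg_left (hL x) (EReal.coe_nonneg.2 hc.le)
  unfold _root_.epicomp
  rw [EReal.le_sub_iff_add_le (.inl (EReal.coe_ne_bot _)) (.inl (EReal.coe_ne_top _)),
    EReal.coe_mul_iInf ha, EReal.coe_mul_iInf hb]
  refine EReal.le_iInf_add_iInf (hne_bot a s₁ ha) (hne_bot b s₂ hb) fun ⟨x, hx⟩ ⟨y, hy⟩ => ?_
  refine EReal.add_le_of_le_sub ?_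
  have hmod : a * b * (μ / ‖A‖ ^ 2 / 2) * ‖s₁ - s₂‖ ^ 2 ≤ a * b * (μ / 2) * ‖x - y‖ ^ 2 := by
    have := A.div_opNorm_sq_mul_norm_apply_sq_le hμ (x - y)
    rw [map_sub, hx, hy] at this
    have : 0 ≤ a * b := by positivity
    nlinarith
  calc _ ≤ f (a • x + b • y) :=
        iInf_le_of_le ⟨a • x + b • y, by simp [hx, hy]⟩ le_rfl
    _ ≤ _ := hsc x y a b ha.le hb.le hab
    _ ≤ _ := EReal.sub_le_sub le_rfl (EReal.coe_le_coe_iff.2 hmod)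

end

theorem epicomposition_strongly_convex_general {m p : ℕ}
    (f : EuclideanSpace ℝ (Fin m) → EReal)
    (hproper : ProperFn f) (hlsc : LowerSemicontinuous f)
    (μ : ℝ) (hμ : 0 < μ) (hsc : EStrongConvexOn μ f)
    (A : EuclideanSpace ℝ (Fin m) →L[ℝ] EuclideanSpace ℝ (Fin p)) :
    EStrongConvexOn (μ / ‖A‖ ^ 2)
      (fun s => ⨅ x : {x : EuclideanSpace ℝ (Fin m) // A x = s}, f x.val) := by
  obtain ⟨L, hL⟩ := hsc.exists_forall_coe_le hμ hproper hlsc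
  exact hsc.epicomp hL hμ.le A

/-- The epicomposition `(A f)(s) = inf{ f(x) : Ax = s }` of a `μ`-strongly convex function
is `(μ/‖A‖²)`-strongly convex. -/
theorem epicomposition_strongly_convex {m p : ℕ}
    (f : EuclideanSpace ℝ (Fin m) → EReal)
    (hproper : ProperFn f) (hlsc : LowerSemicontinuous f)
    (μ : ℝ) (hμ : 0 < μ) (hsc : EStrongConvexOn μ f)
    (A : EuclideanSpace ℝ (Fin m) →L[ℝ] EuclideanSpace ℝ (Fin p)) (hA : A ≠ 0) :
    EStrongConvexOn (μ / ‖A‖ ^ 2)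
      (fun s => ⨅ x : {x : EuclideanSpace ℝ (Fin m) // A x = s}, f x.val) :=
  epicomposition_strongly_convex_general f hproper hlsc μ hμ hsc A
end

section
/- Let φ₁ : ℝᵖ → ℝ be differentiable with L-Lipschitz gradient, φ₂ proper lsc, 0 < γ < 1/L, u = prox_{γφ₁}(s), v ∈ prox_{γφ₂}(2u−s). Then φ^γ_DR(s) = φ₁(u) + φ₂(v) + (1/γ)⟨s−u, v−u⟩ + (1/(2γ))‖v−u‖² equals the minimum over w ∈ ℝᵖ of φ₁(u) + φ₂(w) + ⟨∇φ₁(u), w−u⟩ + (1/(2γ))‖w−u‖², and this minimum is attained at w = v. -/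
open scoped RealInnerProductSpace
open Filter Topology

/- With `u = prox_{γφ₁}(s)`, Fermat's rule gives `∇φ₁(u) = (s - u)/γ`. Expanding the square,
`‖w - (2u - s)‖²/(2γ) = ⟪s - u, w - u⟫/γ + ‖w - u‖²/(2γ) + const`, so `v ∈ prox_{γφ₂}(2u - s)`
minimizes `φ₂(w) + ⟪∇φ₁(u), w - u⟫ + ‖w - u‖²/(2γ)`, and the DRE is this model evaluated at `v`. -/

theorem gradient_eq_of_forall_add_norm_sub_sq_le {F : Type*} [NormedAddCommGroup F]
    [InnerProductSpace ℝ F] [CompleteSpace F] {φ : F → ℝ} {g x u : F} {γ : ℝ}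
    (hφ : HasGradientAt φ g u)
    (hmin : ∀ w, φ u + ‖u - x‖ ^ 2 / (2 * γ) ≤ φ w + ‖w - x‖ ^ 2 / (2 * γ)) :
    g = γ⁻¹ • (x - u) := by
  have hsq := (((hasFDerivAt_id u).sub_const x).norm_sq).mul_const (2 * γ)⁻¹
  simp only [id, ← div_eq_mul_inv] at hsq
  have hderiv := (hasGradientAt_iff_hasFDerivAt.mp hφ).add hsq
  have hlocal : IsLocalMin (fun w => φ w + ‖w - x‖ ^ 2 / (2 * γ)) u := Eventually.of_forall hmin
  have hzero := hlocal.hasFDerivAt_eq_zero hderiv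
  refine ext_inner_right ℝ fun y => ?_
  have hy := congrArg (fun ℓ : F →L[ℝ] ℝ => ℓ y) hzero
  simp only [mul_inv_rev, map_sub, ContinuousLinearMap.comp_id, add_apply,
    InnerProductSpace.toDual_apply_apply, smul_apply, sub_apply, coe_innerSL_apply, nsmul_eq_mul,
    Nat.cast_ofNat, smul_eq_mul, zero_apply] at hy
  rw [real_inner_smul_left, inner_sub_left]
  linear_combination hy

theorem norm_sub_reflect_sq_div {F : Type*} [NormedAddCommGroup F] [InnerProductSpace ℝ F]
    (γ : ℝ) (s u x : F) :
    ‖x - ((2 : ℝ) • u - s)‖ ^ 2 / (2 * γ)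
      = (1 / γ * ⟪s - u, x - u⟫ + ‖x - u‖ ^ 2 / (2 * γ)) + ‖s - u‖ ^ 2 / (2 * γ) := by
  rw [show x - ((2 : ℝ) • u - s) = (x - u) + (s - u) by rw [two_smul]; abel,
    norm_add_sq_real, real_inner_comm]
  ring

theorem IsProx.reflect_model_le {n : ℕ} {φ : EuclideanSpace ℝ (Fin n) → EReal} {γ : ℝ}
    {s u v : EuclideanSpace ℝ (Fin n)} (hv : IsProx φ γ ((2 : ℝ) • u - s) v)
    (w : EuclideanSpace ℝ (Fin n)) :
    φ v + ((1 / γ * ⟪s - u, v - u⟫ + ‖v - u‖ ^ 2 / (2 * γ) : ℝ) : EReal)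
      ≤ φ w + ((1 / γ * ⟪s - u, w - u⟫ + ‖w - u‖ ^ 2 / (2 * γ) : ℝ) : EReal) := by
  have h := hv w
  have hsplit : ∀ (x : EReal) (a c : ℝ), x + ((a + c : ℝ) : EReal) = x + a + c := fun x a c => by
    rw [EReal.coe_add, add_assoc]
  rw [norm_sub_reflect_sq_div, norm_sub_reflect_sq_div, hsplit (φ v), hsplit (φ w)] at h
  exact (EReal.addLECancellable_coe _).add_le_add_iff_right.mp h

theorem dre_eq_fbe_min_general {n : ℕ} (φ₁ : EuclideanSpace ℝ (Fin n) → ℝ)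
    (f' : EuclideanSpace ℝ (Fin n) → EuclideanSpace ℝ (Fin n))
    (hdiff : ∀ x, HasGradientAt φ₁ (f' x) x)
    (φ₂ : EuclideanSpace ℝ (Fin n) → EReal)
    (γ : ℝ)
    (s u v : EuclideanSpace ℝ (Fin n))
    (hu : IsProxR φ₁ γ s u) (hv : IsProx φ₂ γ ((2 : ℝ) • u - s) v) :
    (∀ w, dre (fun x => ((φ₁ x : ℝ) : EReal)) φ₂ γ s u v
        ≤ ((φ₁ u : ℝ) : EReal) + φ₂ w + ((⟪f' u, w - u⟫ + ‖w - u‖ ^ 2 / (2 * γ) : ℝ) : EReal)) ∧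
      dre (fun x => ((φ₁ x : ℝ) : EReal)) φ₂ γ s u v
        = ((φ₁ u : ℝ) : EReal) + φ₂ v + ((⟪f' u, v - u⟫ + ‖v - u‖ ^ 2 / (2 * γ) : ℝ) : EReal) := by
  have hgrad : f' u = γ⁻¹ • (s - u) := gradient_eq_of_forall_add_norm_sub_sq_le (hdiff u) hu
  have hinner : ∀ x, ⟪f' u, x - u⟫ = 1 / γ * ⟪s - u, x - u⟫ := fun x => by
    rw [hgrad, real_inner_smul_left, one_div]
  simp only [dre, hinner, add_assoc]
  exact ⟨fun w => add_le_add_right (hv.reflect_model_le w) _, trivial⟩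

/-- The DRE equals the minimum of the forward-backward model
`w ↦ φ₁(u) + φ₂(w) + ⟪∇φ₁(u), w−u⟫ + ‖w−u‖²/(2γ)`, attained at `w = v`. -/
theorem dre_eq_fbe_min {n : ℕ} (φ₁ : EuclideanSpace ℝ (Fin n) → ℝ)
    (f' : EuclideanSpace ℝ (Fin n) → EuclideanSpace ℝ (Fin n)) (L : ℝ) (hL : 0 < L)
    (hdiff : ∀ x, HasGradientAt φ₁ (f' x) x)
    (hlip : ∀ x y, ‖f' x - f' y‖ ≤ L * ‖x - y‖)
    (φ₂ : EuclideanSpace ℝ (Fin n) → EReal)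
    (h2p : ProperFn φ₂) (h2l : LowerSemicontinuous φ₂)
    (γ : ℝ) (hγ0 : 0 < γ) (hγ : γ < 1 / L)
    (s u v : EuclideanSpace ℝ (Fin n))
    (hu : IsProxR φ₁ γ s u) (hv : IsProx φ₂ γ ((2 : ℝ) • u - s) v) :
    (∀ w, dre (fun x => ((φ₁ x : ℝ) : EReal)) φ₂ γ s u v
        ≤ ((φ₁ u : ℝ) : EReal) + φ₂ w + ((⟪f' u, w - u⟫ + ‖w - u‖ ^ 2 / (2 * γ) : ℝ) : EReal)) ∧
      dre (fun x => ((φ₁ x : ℝ) : EReal)) φ₂ γ s u v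
        = ((φ₁ u : ℝ) : EReal) + φ₂ v + ((⟪f' u, v - u⟫ + ‖v - u‖ ^ 2 / (2 * γ) : ℝ) : EReal) :=
  dre_eq_fbe_min_general φ₁ f' hdiff φ₂ γ s u v hu hv
end
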